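/- arXiv:2104.09575 — 3 statements merged into one kernel-verified Lean document; each statement's English description precedes it below -/
import Mathlib

section
/- Let $d \in \mathbb{N}$, $p > d$, $n \in \mathbb{N}$, and let $I_n = \{m/n : m = 0, \dots, n-1\}^d \subset (0,1)^d$ be the uniform lattice. Then for every $f \in W^{1,p}((0,1)^d)$ one has $\left| n^{-d} \sum_{\xi \in I_n} f(\xi) - \int_{(0,1)^d} f(x)\,dx \right| \leq \frac{2 n^{-1 + d/p}}{1 - d/p} \|\nabla f\|_{L^p((0,1)^d)}$. -/
/-!
On a lattice cell `Q` of side `1/n` with corner `ξ`, the quadrature error is at most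
`∫_Q |f x - f ξ| dx`. Writing `f x - f ξ` as the integral of `∇f` along the segment from `ξ` to
`x` and exchanging the integrals, it suffices to bound, for each `t ∈ (0,1)`, the integral over `Q`
of `|∇f (ξ + t (x - ξ))|`. Hölder's inequality on `Q` followed by the change of variables
`x ↦ ξ + t (x - ξ)`, whose Jacobian is `t^d` and which maps `Q` into the unit cube, bounds it by
`t^(-d/p) |Q|^(1 - 1/p) ‖∇f‖_p`; since `p > d`, `∫₀¹ t^(-d/p) dt = 1/(1 - d/p)` is finite.
Summing over the `n^d` cells gives the bound with constant `1` in place of `2`.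

The gradient is handled through `fderiv ℝ f`, which is Borel measurable (as Tonelli's theorem
requires) and agrees with `f'` on the open cube.
-/

open MeasureTheory Set Module
open scoped ENNReal

theorem enorm_sub_le_lintegral_enorm_deriv {E : Type*} [NormedAddCommGroup E] [NormedSpace ℝ E]
    [CompleteSpace E] {g : ℝ → E} {a b : ℝ} (hab : a ≤ b) (hc : ContinuousOn g (Icc a b))
    (hd : DifferentiableOn ℝ g (Ioo a b)) :
    ‖g b - g a‖ₑ ≤ ∫⁻ t in Ioo a b, ‖deriv g t‖ₑ := by
  by_cases hfin : ∫⁻ t in Ioo a b, ‖deriv g t‖ₑ = ∞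
  · simp [hfin]
  have hint : IntegrableOn (deriv g) (Ioo a b) :=
    ⟨aestronglyMeasurable_deriv g _, lt_top_iff_ne_top.2 hfin⟩
  have hB : IntervalIntegrable (fun t => ‖deriv g t‖) volume a b := by
    rw [intervalIntegrable_iff_integrableOn_Ioo_of_le hab]; exact hint.norm
  have h := norm_sub_le_integral_of_norm_deriv_le_of_le hab hc hd
    (ae_of_all _ fun t _ => le_rfl) hB
  rw [intervalIntegral.integral_of_le hab, integral_Ioc_eq_integral_Ioo] at h
  rw [← ofReal_norm, ← ofReal_integral_norm_eq_lintegral_enorm hint]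
  exact ENNReal.ofReal_le_ofReal h

theorem enorm_sub_le_mul_lintegral_enorm_fderiv {E F : Type*} [NormedAddCommGroup E]
    [NormedSpace ℝ E] [NormedAddCommGroup F] [NormedSpace ℝ F] [CompleteSpace F] {f : E → F}
    {a b : E}
    (hc : ContinuousOn f (segment ℝ a b))
    (hd : ∀ t ∈ Ioo (0 : ℝ) 1, DifferentiableAt ℝ f (a + t • (b - a))) :
    ‖f b - f a‖ₑ ≤ ‖b - a‖ₑ * ∫⁻ t in Ioo (0 : ℝ) 1, ‖fderiv ℝ f (a + t • (b - a))‖ₑ := by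
  set γ : ℝ → E := fun t => a + t • (b - a)
  have hγ : ∀ t, HasDerivAt γ (b - a) t := fun t => by
    simpa only [one_smul] using ((hasDerivAt_id' t).smul_const (b - a)).const_add a
  have hderiv : ∀ t ∈ Ioo (0 : ℝ) 1, HasDerivAt (f ∘ γ) (fderiv ℝ f (γ t) (b - a)) t :=
    fun t ht => (hd t ht).hasFDerivAt.comp_hasDerivAt t (hγ t)
  have hcγ : ContinuousOn (f ∘ γ) (Icc 0 1) :=
    hc.comp (by fun_prop) (by rw [segment_eq_image']; exact mapsTo_image _ _)
  calc ‖f b - f a‖ₑ = ‖(f ∘ γ) 1 - (f ∘ γ) 0‖ₑ := by simp [γ]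
    _ ≤ ∫⁻ t in Ioo 0 1, ‖deriv (f ∘ γ) t‖ₑ :=
      enorm_sub_le_lintegral_enorm_deriv zero_le_one hcγ
        fun t ht => (hderiv t ht).differentiableAt.differentiableWithinAt
    _ ≤ ∫⁻ t in Ioo 0 1, ‖fderiv ℝ f (γ t)‖ₑ * ‖b - a‖ₑ :=
      setLIntegral_mono' measurableSet_Ioo fun t ht =>
        (hderiv t ht).deriv ▸ ContinuousLinearMap.le_opENorm _ _
    _ = _ := by rw [lintegral_mul_const' _ _ enorm_ne_top, mul_comm]

theorem lintegral_Ioo_zero_one_rpow_neg {a : ℝ} (ha : a < 1) :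
    ∫⁻ t in Ioo (0 : ℝ) 1, ENNReal.ofReal (t ^ (-a)) = ENNReal.ofReal (1 - a)⁻¹ := by
  have hint : IntegrableOn (fun t : ℝ => t ^ (-a)) (Ioo 0 1) := by
    rw [← integrableOn_Ioc_iff_integrableOn_Ioo, ← intervalIntegrable_iff_integrableOn_Ioc_of_le
      zero_le_one]
    exact intervalIntegral.intervalIntegrable_rpow' (by linarith)
  rw [← ofReal_integral_eq_lintegral_ofReal hint
      (ae_restrict_of_forall_mem measurableSet_Ioo fun t ht => Real.rpow_nonneg ht.1.le _),
    ← integral_Ioc_eq_integral_Ioo, ← intervalIntegral.integral_of_le zero_le_one,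
    integral_rpow (Or.inl (by linarith))]
  rw [Real.one_rpow, Real.zero_rpow (by linarith), sub_zero, neg_add_eq_sub, one_div]

theorem setLIntegral_le_lintegral_rpow_mul_measure_rpow {α : Type*} [MeasurableSpace α]
    (μ : Measure α) (s : Set α) {g : α → ℝ≥0∞} (hg : AEMeasurable g (μ.restrict s)) {p : ℝ}
    (hp : 1 < p) :
    ∫⁻ x in s, g x ∂μ ≤ (∫⁻ x in s, g x ^ p ∂μ) ^ p⁻¹ * μ s ^ (1 - p⁻¹) := by
  have hpq := Real.HolderConjugate.conjExponent hp
  simpa [one_div, hpq.one_sub_inv] using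
    ENNReal.lintegral_mul_le_Lp_mul_Lq (μ.restrict s) hpq hg (aemeasurable_const (b := 1))

section FiniteDimensional

variable {E : Type*} [NormedAddCommGroup E] [NormedSpace ℝ E] [FiniteDimensional ℝ E]
  [MeasurableSpace E] [BorelSpace E]

theorem map_homothety_addHaar (μ : Measure E) [μ.IsAddHaarMeasure] {c : E} {t : ℝ}
    (ht : 0 < t) :
    μ.map (fun x => c + t • (x - c)) = ENNReal.ofReal (t ^ (-(finrank ℝ E : ℝ))) • μ := by
  have hcomp : (fun x : E => c + t • (x - c)) = (fun y => (c - t • c) + y) ∘ (t • ·) := by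
    funext x; simp only [Function.comp_apply, smul_sub]; abel
  rw [hcomp, ← Measure.map_map (measurable_const_add _) (measurable_const_smul t),
    Measure.map_addHaar_smul μ ht.ne', Measure.map_smul,
    Measure.IsAddLeftInvariant.map_add_left_eq_self, Real.rpow_neg ht.le, Real.rpow_natCast,
    abs_of_pos (by positivity)]

theorem setLIntegral_comp_homothety_le (μ : Measure E) [μ.IsAddHaarMeasure] {g : E → ℝ≥0∞}
    (hg : Measurable g) {c : E} {t : ℝ} (ht : 0 < t) {Q U : Set E} (hU : MeasurableSet U)
    (hQU : MapsTo (fun x => c + t • (x - c)) Q U) :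
    ∫⁻ x in Q, g (c + t • (x - c)) ∂μ ≤
      ENNReal.ofReal (t ^ (-(finrank ℝ E : ℝ))) * ∫⁻ y in U, g y ∂μ := by
  calc ∫⁻ x in Q, g (c + t • (x - c)) ∂μ
      ≤ ∫⁻ x in (fun x => c + t • (x - c)) ⁻¹' U, g (c + t • (x - c)) ∂μ :=
        lintegral_mono_set hQU
    _ = ∫⁻ y in U, g y ∂(μ.map fun x => c + t • (x - c)) :=
        (setLIntegral_map hU hg (by fun_prop)).symm
    _ = _ := by
        rw [map_homothety_addHaar μ ht, Measure.restrict_smul, lintegral_smul_measure,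
          smul_eq_mul]

variable {F : Type*} [NormedAddCommGroup F] [NormedSpace ℝ F] [CompleteSpace F]

theorem setLIntegral_enorm_sub_le_lintegral_fderiv (μ : Measure E) [SFinite μ] {f : E → F}
    {K Q : Set E} {ξ : E} {r : ℝ}
    (hK : Convex ℝ K) (hf : ContinuousOn f K) (hdf : ∀ y ∈ interior K, DifferentiableAt ℝ f y)
    (hξ : ξ ∈ K) (hQ : Q ⊆ interior K) (hr : ∀ x ∈ Q, ‖x - ξ‖ ≤ r) :
    ∫⁻ x in Q, ‖f x - f ξ‖ₑ ∂μ ≤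
      ENNReal.ofReal r * ∫⁻ t in Ioo (0 : ℝ) 1, ∫⁻ x in Q, ‖fderiv ℝ f (ξ + t • (x - ξ))‖ₑ ∂μ := by
  have hmeas : Measurable fun z : E × ℝ => ‖fderiv ℝ f (ξ + z.2 • (z.1 - ξ))‖ₑ :=
    (measurable_fderiv ℝ f).enorm.comp (by fun_prop)
  calc ∫⁻ x in Q, ‖f x - f ξ‖ₑ ∂μ
      ≤ ∫⁻ x in Q, ENNReal.ofReal r *
          (∫⁻ t in Ioo (0 : ℝ) 1, ‖fderiv ℝ f (ξ + t • (x - ξ))‖ₑ) ∂μ := by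
        refine setLIntegral_mono (measurable_const.mul hmeas.lintegral_prod_right') fun x hx => ?_
        have hx' := hQ hx
        refine (enorm_sub_le_mul_lintegral_enorm_fderiv (hf.mono (hK.segment_subset hξ
          (interior_subset hx'))) fun t ht => hdf _ (hK.add_smul_sub_mem_interior hξ hx'
          (Ioo_subset_Ioc_self ht))).trans ?_
        gcongr
        rw [← ofReal_norm]
        exact ENNReal.ofReal_le_ofReal (hr x hx)
    _ = _ := by
        rw [lintegral_const_mul' _ _ ENNReal.ofReal_ne_top,
          lintegral_lintegral_swap hmeas.aemeasurable]

theorem setLIntegral_enorm_sub_le_eLpNorm_fderiv (μ : Measure E) [μ.IsAddHaarMeasure]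
    {f : E → F} {K Q : Set E} {ξ : E} {r p : ℝ}
    (hK : Convex ℝ K) (hf : ContinuousOn f K) (hdf : ∀ y ∈ interior K, DifferentiableAt ℝ f y)
    (hξ : ξ ∈ K) (hQ : Q ⊆ interior K) (hr : ∀ x ∈ Q, ‖x - ξ‖ ≤ r) (hp : 1 < p)
    (hdp : (finrank ℝ E : ℝ) < p) :
    ∫⁻ x in Q, ‖f x - f ξ‖ₑ ∂μ ≤
      ENNReal.ofReal (r / (1 - finrank ℝ E / p)) * μ Q ^ (1 - p⁻¹) *
        eLpNorm (fderiv ℝ f) (ENNReal.ofReal p) (μ.restrict (interior K)) := by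
  have hp0 : 0 < p := zero_lt_one.trans hp
  set d : ℝ := (finrank ℝ E : ℝ)
  set C := μ Q ^ (1 - p⁻¹) * eLpNorm (fderiv ℝ f) (ENNReal.ofReal p) (μ.restrict (interior K))
    with hC
  have hG : Measurable fun y => ‖fderiv ℝ f y‖ₑ := (measurable_fderiv ℝ f).enorm
  have hslice : ∀ t ∈ Ioo (0 : ℝ) 1,
      ∫⁻ x in Q, ‖fderiv ℝ f (ξ + t • (x - ξ))‖ₑ ∂μ ≤ ENNReal.ofReal (t ^ (-(d / p))) * C := by
    intro t ht
    have hscale := setLIntegral_comp_homothety_le μ (hG.pow_const p) ht.1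
      isOpen_interior.measurableSet fun x hx =>
        hK.add_smul_sub_mem_interior hξ (hQ hx) (Ioo_subset_Ioc_self ht)
    calc ∫⁻ x in Q, ‖fderiv ℝ f (ξ + t • (x - ξ))‖ₑ ∂μ
        ≤ (∫⁻ x in Q, ‖fderiv ℝ f (ξ + t • (x - ξ))‖ₑ ^ p ∂μ) ^ p⁻¹ * μ Q ^ (1 - p⁻¹) :=
          setLIntegral_le_lintegral_rpow_mul_measure_rpow μ Q
            (hG.comp (by fun_prop)).aemeasurable hp
      _ ≤ (ENNReal.ofReal (t ^ (-d)) * ∫⁻ y in interior K, ‖fderiv ℝ f y‖ₑ ^ p ∂μ) ^ p⁻¹ *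
            μ Q ^ (1 - p⁻¹) := by gcongr
      _ = ENNReal.ofReal (t ^ (-(d / p))) * C := by
          rw [hC, eLpNorm_eq_lintegral_rpow_enorm_toReal (by simpa using hp0) ENNReal.ofReal_ne_top,
            ENNReal.toReal_ofReal hp0.le, ENNReal.mul_rpow_of_nonneg _ _ (by positivity),
            ENNReal.ofReal_rpow_of_pos (by have := ht.1; positivity), ← Real.rpow_mul ht.1.le,
            one_div, neg_mul, ← div_eq_mul_inv]
          ring
  have hdp' : d / p < 1 := (div_lt_one hp0).2 hdp
  calc ∫⁻ x in Q, ‖f x - f ξ‖ₑ ∂μ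
      ≤ ENNReal.ofReal r * ∫⁻ t in Ioo (0 : ℝ) 1, ∫⁻ x in Q, ‖fderiv ℝ f (ξ + t • (x - ξ))‖ₑ ∂μ :=
        setLIntegral_enorm_sub_le_lintegral_fderiv μ hK hf hdf hξ hQ hr
    _ ≤ ENNReal.ofReal r * ∫⁻ t in Ioo (0 : ℝ) 1, ENNReal.ofReal (t ^ (-(d / p))) * C :=
        mul_le_mul_right (setLIntegral_mono (by fun_prop) hslice) _
    _ = ENNReal.ofReal (r / (1 - d / p)) * C := by
        rw [lintegral_mul_const _ (by fun_prop), lintegral_Ioo_zero_one_rpow_neg hdp', ← mul_assoc,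
          ← ENNReal.ofReal_mul' (by linarith [inv_pos.2 (sub_pos.2 hdp')]), div_eq_mul_inv r]
    _ = _ := by rw [mul_assoc]

end FiniteDimensional

def latticeCell {d : ℕ} (n : ℕ) (m : Fin d → Fin n) : Set (Fin d → ℝ) :=
  univ.pi fun i => Ico ((m i : ℝ) / n) ((m i + 1 : ℝ) / n)

section LatticeCell

variable {d n : ℕ}

theorem measurableSet_latticeCell (m : Fin d → Fin n) : MeasurableSet (latticeCell n m) :=
  MeasurableSet.univ_pi fun _ => measurableSet_Ico

theorem mem_latticeCell_iff (hn : 0 < n) {m : Fin d → Fin n} {x : Fin d → ℝ} :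
    x ∈ latticeCell n m ↔ ∀ i, 0 ≤ x i ∧ ⌊x i * n⌋₊ = m i := by
  have hn' : (0 : ℝ) < n := by exact_mod_cast hn
  refine forall_congr' fun i => ?_
  simp only [mem_univ, true_imp_iff, mem_Ico, div_le_iff₀ hn', lt_div_iff₀ hn']
  constructor
  · rintro ⟨h₁, h₂⟩
    have h₀ : 0 ≤ x i := by
      by_contra! h; nlinarith [(m i : ℕ).cast_nonneg (α := ℝ)]
    exact ⟨h₀, (Nat.floor_eq_iff (by positivity)).2 ⟨h₁, h₂⟩⟩
  · rintro ⟨h₀, h⟩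
    exact (Nat.floor_eq_iff (by positivity)).1 h

theorem pairwise_disjoint_latticeCell (hn : 0 < n) :
    Pairwise (Function.onFun Disjoint (latticeCell (d := d) n)) := by
  intro m m' hmm'
  refine disjoint_left.2 fun x hx hx' => hmm' (funext fun i => Fin.ext ?_)
  rw [← ((mem_latticeCell_iff hn).1 hx i).2, ← ((mem_latticeCell_iff hn).1 hx' i).2]

theorem iUnion_latticeCell (hn : 0 < n) :
    ⋃ m, latticeCell (d := d) n m = univ.pi fun _ => Ico 0 1 := by
  have hn' : (0 : ℝ) < n := by exact_mod_cast hn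
  ext x
  simp only [mem_iUnion, mem_latticeCell_iff hn, mem_univ_pi, mem_Ico]
  constructor
  · rintro ⟨m, hm⟩ i
    refine ⟨(hm i).1, ?_⟩
    have h := (Nat.floor_lt (by have := (hm i).1; positivity)).1 ((hm i).2 ▸ (m i).isLt)
    nlinarith
  · intro hx
    refine ⟨fun i => ⟨⌊x i * n⌋₊, ?_⟩, fun i => ⟨(hx i).1, rfl⟩⟩
    exact (Nat.floor_lt (by have := (hx i).1; positivity)).2 (by nlinarith [(hx i).2])

theorem volume_latticeCell (m : Fin d → Fin n) :
    volume (latticeCell n m) = ENNReal.ofReal ((n : ℝ)⁻¹ ^ d) := by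
  rw [latticeCell, Real.volume_pi_Ico, ENNReal.ofReal_pow (by positivity)]
  simp only [add_div, add_sub_cancel_left, one_div, Finset.prod_const, Finset.card_univ,
    Fintype.card_fin]

theorem latticeCell_ae_eq (m : Fin d → Fin n) :
    latticeCell n m =ᵐ[volume] univ.pi fun i => Ioo ((m i : ℝ) / n) ((m i + 1 : ℝ) / n) := by
  rw [volume_pi]
  exact Measure.univ_pi_Ico_ae_eq_Icc.trans Measure.univ_pi_Ioo_ae_eq_Icc.symm

theorem interior_Icc_zero_one_pi :
    interior (Icc (0 : Fin d → ℝ) 1) = univ.pi fun _ => Ioo 0 1 := by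
  rw [← pi_univ_Icc, interior_pi_set finite_univ]
  simp

theorem Icc_zero_one_pi_ae_eq : Icc (0 : Fin d → ℝ) 1 =ᵐ[volume] univ.pi fun _ => Ioo 0 1 := by
  rw [volume_pi]
  exact Measure.univ_pi_Ioo_ae_eq_Icc.symm

theorem latticeCell_subset_Icc (hn : 0 < n) (m : Fin d → Fin n) :
    latticeCell n m ⊆ Icc 0 1 := by
  intro x hx
  have hx' : x ∈ univ.pi fun _ => Ico (0 : ℝ) 1 := iUnion_latticeCell hn ▸ mem_iUnion_of_mem m hx
  rw [← pi_univ_Icc]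
  exact fun i _ => Ico_subset_Icc_self (hx' i trivial)

variable {F : Type*} [NormedAddCommGroup F] [NormedSpace ℝ F]

theorem integral_Icc_eq_sum_latticeCell (hn : 0 < n) {f : (Fin d → ℝ) → F}
    (hf : IntegrableOn f (Icc 0 1)) :
    ∫ x in Icc 0 1, f x = ∑ m, ∫ x in latticeCell n m, f x := by
  have hae : Icc (0 : Fin d → ℝ) 1 =ᵐ[volume] ⋃ m, latticeCell n m := by
    rw [iUnion_latticeCell hn, volume_pi]
    exact Measure.univ_pi_Ico_ae_eq_Icc.symm
  rw [setIntegral_congr_set hae, integral_iUnion measurableSet_latticeCell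
    (pairwise_disjoint_latticeCell hn) (hf.congr_set_ae hae.symm), tsum_fintype]

theorem smul_sum_sub_integral_eq_sum_setIntegral [CompleteSpace F] (hn : 0 < n)
    {f : (Fin d → ℝ) → F} (hf : IntegrableOn f (Icc 0 1)) :
    ((n : ℝ)⁻¹ ^ d) • ∑ m : Fin d → Fin n, f (fun i => (m i : ℝ) / n) - ∫ x in Icc 0 1, f x =
      ∑ m, ∫ x in latticeCell n m, (f (fun i => (m i : ℝ) / n) - f x) := by
  rw [integral_Icc_eq_sum_latticeCell hn hf, Finset.smul_sum, ← Finset.sum_sub_distrib]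
  refine Finset.sum_congr rfl fun m _ => ?_
  rw [integral_sub (integrableOn_const (by simp [volume_latticeCell])).integrable
      (hf.mono_set (latticeCell_subset_Icc hn m)).integrable,
    setIntegral_const, measureReal_def, volume_latticeCell, ENNReal.toReal_ofReal (by positivity)]

theorem setLIntegral_latticeCell_enorm_sub_le [CompleteSpace F] (hn : 0 < n) (m : Fin d → Fin n)
    {f : (Fin d → ℝ) → F} (hf : ContinuousOn f (Icc 0 1))
    (hdf : ∀ y ∈ univ.pi fun _ => Ioo (0 : ℝ) 1, DifferentiableAt ℝ f y) {p : ℝ} (hp : 1 < p)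
    (hdp : (d : ℝ) < p) :
    ∫⁻ x in latticeCell n m, ‖f x - f (fun i => (m i : ℝ) / n)‖ₑ ≤
      ENNReal.ofReal ((n : ℝ)⁻¹ / (1 - d / p)) * ENNReal.ofReal ((n : ℝ)⁻¹ ^ d) ^ (1 - p⁻¹) *
        eLpNorm (fderiv ℝ f) (ENNReal.ofReal p) (volume.restrict (univ.pi fun _ => Ioo 0 1)) := by
  have hn' : (0 : ℝ) < n := by exact_mod_cast hn
  set ξ : Fin d → ℝ := fun i => (m i : ℝ) / n
  have hξ : ξ ∈ Icc 0 1 := latticeCell_subset_Icc hn m fun i _ => ⟨le_rfl, by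
    rw [div_lt_div_iff_of_pos_right hn']; linarith⟩
  have hQ : (univ.pi fun i => Ioo ((m i : ℝ) / n) ((m i + 1 : ℝ) / n)) ⊆ interior (Icc 0 1) := by
    rw [interior_Icc_zero_one_pi]
    refine pi_mono fun i _ => Ioo_subset_Ioo (by positivity) ?_
    rw [div_le_one hn']
    exact_mod_cast (m i).isLt
  have hr : ∀ x ∈ univ.pi fun i => Ioo ((m i : ℝ) / n) ((m i + 1 : ℝ) / n),
      ‖x - ξ‖ ≤ (n : ℝ)⁻¹ := by
    refine fun x hx => (pi_norm_le_iff_of_nonneg (by positivity)).2 fun i => ?_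
    obtain ⟨h₁, h₂⟩ : x i ∈ Ioo ((m i : ℝ) / n) ((m i + 1 : ℝ) / n) := hx i trivial
    rw [add_div, one_div] at h₂
    rw [Pi.sub_apply, Real.norm_eq_abs, abs_le]
    constructor <;> linarith
  rw [Measure.restrict_congr_set (latticeCell_ae_eq m), ← volume_latticeCell m,
    measure_congr (latticeCell_ae_eq m), ← interior_Icc_zero_one_pi]
  have := setLIntegral_enorm_sub_le_eLpNorm_fderiv volume (convex_Icc 0 1) hf
    (interior_Icc_zero_one_pi (d := d) ▸ hdf) hξ hQ hr hp (by rwa [finrank_fin_fun])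
  rwa [finrank_fin_fun] at this

theorem enorm_smul_sum_sub_integral_le [CompleteSpace F] (hn : 0 < n) {f : (Fin d → ℝ) → F}
    (hf : ContinuousOn f (Icc 0 1))
    (hdf : ∀ y ∈ univ.pi fun _ => Ioo (0 : ℝ) 1, DifferentiableAt ℝ f y) {p : ℝ} (hp : 1 < p)
    (hdp : (d : ℝ) < p) :
    ‖((n : ℝ)⁻¹ ^ d) • ∑ m : Fin d → Fin n, f (fun i => (m i : ℝ) / n) - ∫ x in Icc 0 1, f x‖ₑ ≤
      ENNReal.ofReal ((n : ℝ) ^ (-1 + d / p) / (1 - d / p)) *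
        eLpNorm (fderiv ℝ f) (ENNReal.ofReal p) (volume.restrict (univ.pi fun _ => Ioo 0 1)) := by
  rw [smul_sum_sub_integral_eq_sum_setIntegral hn (hf.integrableOn_compact isCompact_Icc)]
  calc _ ≤ ∑ m : Fin d → Fin n, ∫⁻ x in latticeCell n m, ‖f x - f (fun i => (m i : ℝ) / n)‖ₑ :=
        (enorm_sum_le _ _).trans <| Finset.sum_le_sum fun m _ =>
          (enorm_integral_le_lintegral_enorm _).trans_eq <|
            lintegral_congr fun x => enorm_sub_rev _ _
    _ ≤ ∑ _m : Fin d → Fin n, ENNReal.ofReal ((n : ℝ)⁻¹ / (1 - d / p)) *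
          ENNReal.ofReal ((n : ℝ)⁻¹ ^ d) ^ (1 - p⁻¹) *
            eLpNorm (fderiv ℝ f) (ENNReal.ofReal p) (volume.restrict (univ.pi fun _ => Ioo 0 1)) :=
        Finset.sum_le_sum fun m _ => setLIntegral_latticeCell_enorm_sub_le hn m hf hdf hp hdp
    _ = _ := by
        have hn' : (0 : ℝ) < n := by exact_mod_cast hn
        have hdp' : 0 < 1 - d / p := sub_pos.2 ((div_lt_one (by linarith)).2 hdp)
        rw [Finset.sum_const, Finset.card_univ, Fintype.card_fun, Fintype.card_fin,
          Fintype.card_fin, nsmul_eq_mul, ← mul_assoc, ← mul_assoc,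
          ENNReal.ofReal_rpow_of_nonneg (by positivity) (by linarith [inv_lt_one_of_one_lt₀ hp]),
          ← ENNReal.ofReal_natCast, ← ENNReal.ofReal_mul (by positivity),
          ← ENNReal.ofReal_mul (mul_nonneg (by positivity) (div_nonneg (by positivity) hdp'.le))]
        congr 2
        rw [← Real.rpow_natCast, ← Real.rpow_mul (by positivity), Real.inv_rpow hn'.le,
          ← Real.rpow_neg hn'.le, Nat.cast_pow, ← Real.rpow_natCast, ← Real.rpow_neg_one,
          mul_div_assoc', div_mul_eq_mul_div, ← Real.rpow_add hn', ← Real.rpow_add hn']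
        congr 2
        ring

end LatticeCell

/-- Quadrature error bound: for `f ∈ W^{1,p}((0,1)^d)` with `p > d`
(realized as a continuous function on the closed cube, differentiable on the
open cube, with derivative in `L^p`), the uniform lattice sum of mesh `1/n`
approximates the integral with error `2 n^{-1+d/p}/(1-d/p) ‖∇f‖_{L^p}`. -/
theorem lattice_sum_approx_integral (d : ℕ) (hd : 0 < d) (p : ℝ) (hp : (d : ℝ) < p)
    (n : ℕ) (hn : 0 < n)
    (f : (Fin d → ℝ) → ℂ) (f' : (Fin d → ℝ) → ((Fin d → ℝ) →L[ℝ] ℂ))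
    (hf : ContinuousOn f (Set.Icc 0 1))
    (hdf : ∀ x ∈ (Set.univ.pi fun _ : Fin d => Set.Ioo (0 : ℝ) 1), HasFDerivAt f (f' x) x)
    (hint : MemLp (fun x => f' x) (ENNReal.ofReal p)
      (volume.restrict (Set.Icc (0 : Fin d → ℝ) 1))) :
    ‖(n : ℂ) ^ (-(d : ℤ)) * ∑ m : Fin d → Fin n, f (fun i => (m i : ℝ) / n)
        - ∫ x in Set.Icc (0 : Fin d → ℝ) 1, f x‖ ≤
      2 * (n : ℝ) ^ (-1 + (d : ℝ) / p) / (1 - (d : ℝ) / p) *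
        (eLpNorm (fun x => f' x) (ENNReal.ofReal p)
          (volume.restrict (Set.Icc (0 : Fin d → ℝ) 1))).toReal := by
  have hp1 : 1 < p := lt_of_le_of_lt (by exact_mod_cast hd) hp
  have hN : eLpNorm (fun x => f' x) (ENNReal.ofReal p) (volume.restrict (Icc 0 1)) =
      eLpNorm (fderiv ℝ f) (ENNReal.ofReal p) (volume.restrict (univ.pi fun _ => Ioo 0 1)) := by
    rw [Measure.restrict_congr_set Icc_zero_one_pi_ae_eq]
    exact eLpNorm_congr_ae (ae_restrict_of_forall_mem
      (MeasurableSet.univ_pi fun _ => measurableSet_Ioo) fun x hx => (hdf x hx).fderiv.symm)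
  have hsmul : (n : ℂ) ^ (-(d : ℤ)) * ∑ m : Fin d → Fin n, f (fun i => (m i : ℝ) / n) =
      ((n : ℝ)⁻¹ ^ d) • ∑ m : Fin d → Fin n, f (fun i => (m i : ℝ) / n) := by
    rw [Complex.real_smul]; push_cast; rw [zpow_neg, zpow_natCast, inv_pow]
  have hbound := enorm_smul_sum_sub_integral_le hn hf (fun y hy => (hdf y hy).differentiableAt)
    hp1 hp
  rw [← hsmul, ← hN] at hbound
  have hc : 0 ≤ (n : ℝ) ^ (-1 + (d : ℝ) / p) / (1 - (d : ℝ) / p) := by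
    have : (d : ℝ) / p < 1 := (div_lt_one (by linarith)).2 hp
    have : (0 : ℝ) < n := by exact_mod_cast hn
    positivity
  calc _ = ‖_‖ₑ.toReal := (toReal_enorm _).symm
    _ ≤ (ENNReal.ofReal ((n : ℝ) ^ (-1 + (d : ℝ) / p) / (1 - (d : ℝ) / p)) *
          eLpNorm (fun x => f' x) (ENNReal.ofReal p) (volume.restrict (Icc 0 1))).toReal :=
        ENNReal.toReal_mono (ENNReal.mul_ne_top ENNReal.ofReal_ne_top hint.eLpNorm_ne_top) hbound
    _ ≤ _ := by
        rw [ENNReal.toReal_mul, ENNReal.toReal_ofReal hc, mul_div_assoc 2]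
        exact mul_le_mul_of_nonneg_right (by linarith) ENNReal.toReal_nonneg
end

section
/- Let $h > 0$, $0 < q_1 < q_2 < 1$, and let $V : \mathbb{R} \to \mathbb{R}$ be the 1-periodic function equal to $-h$ on $[q_1, q_2]$ and $0$ on $[0,1] \setminus [q_1, q_2]$. Let $\tilde{V} : \mathbb{R} \to \mathbb{R}$ be any 1-periodic, locally integrable function with $\tilde{V} \leq 0$. For $n \in \mathbb{N}$ let $\phi_n : \mathbb{R} \to \mathbb{R}$ be defined by $\phi_n(x) = 1/\sqrt{2n}$ on $[-n,n]$, linear from $1/\sqrt{2n}$ to $0$ on $[-n-1,-n]$ and $[n,n+1]$, and $0$ elsewhere. Then $\int_{\mathbb{R}} |\phi_n'|^2\,dx + \int_{\mathbb{R}} (\tilde{V} + V)|\phi_n|^2\,dx \leq \frac{1}{n} - (q_2 - q_1)h$. -/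
/-!
The kinetic term is exactly `1/n`: `φₙ' = ±1/√(2n)` on two unit intervals. In the potential
term `W + V ≤ 0`, so the integrand may be dropped off the plateau `[-n, n]`, where
`φₙ² = 1/(2n)`; there `W ≤ 0` only lowers the integral, and `[-n, n]` consists of `2n` periods of
`V`, each contributing `-(q₂ - q₁) h`.
-/

open MeasureTheory Set

noncomputable section

def plateau (n : ℕ) (x : ℝ) : ℝ :=
  if |x| ≤ (n : ℝ) then 1 / Real.sqrt (2 * n)
  else if |x| ≤ (n : ℝ) + 1 then ((n : ℝ) + 1 - |x|) / Real.sqrt (2 * n) else 0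

def plateauDeriv (n : ℕ) (x : ℝ) : ℝ :=
  if -(n : ℝ) - 1 < x ∧ x < -(n : ℝ) then 1 / Real.sqrt (2 * n)
  else if (n : ℝ) < x ∧ x < (n : ℝ) + 1 then -(1 / Real.sqrt (2 * n)) else 0

end

lemma one_div_sqrt_two_mul_sq (n : ℕ) : (1 / Real.sqrt (2 * n)) ^ 2 = 1 / (2 * n) := by
  rw [div_pow, one_pow, Real.sq_sqrt (by positivity)]

lemma plateau_eq_clamp (n : ℕ) (x : ℝ) :
    plateau n x = min 1 (max 0 ((n : ℝ) + 1 - |x|)) / Real.sqrt (2 * n) := by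
  unfold plateau
  split_ifs
  · rw [min_eq_left (le_max_of_le_right (by linarith))]
  · rw [max_eq_right (by linarith), min_eq_right (by linarith)]
  · rw [max_eq_left (by linarith), min_eq_right zero_le_one, zero_div]

lemma continuous_plateau (n : ℕ) : Continuous (plateau n) := by
  rw [funext (plateau_eq_clamp n)]
  fun_prop

lemma hasCompactSupport_plateau (n : ℕ) : HasCompactSupport (plateau n) := by
  refine HasCompactSupport.intro (isCompact_Icc (a := -((n : ℝ) + 1)) (b := n + 1)) ?_
  intro x hx
  have : (n : ℝ) + 1 < |x| := lt_of_not_ge fun h => hx (abs_le.1 h)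
  rw [plateau, if_neg (by linarith), if_neg (by linarith)]

lemma plateau_sq_of_abs_le {n : ℕ} {x : ℝ} (hx : |x| ≤ n) :
    plateau n x ^ 2 = 1 / (2 * n) := by
  rw [plateau, if_pos hx, one_div_sqrt_two_mul_sq]

lemma plateauDeriv_sq (n : ℕ) :
    (fun x => plateauDeriv n x ^ 2) =
      (Ioo (-(n : ℝ) - 1) (-n) ∪ Ioo (n : ℝ) (n + 1)).indicator fun _ => 1 / (2 * (n : ℝ)) := by
  ext x
  simp only [plateauDeriv, indicator, mem_union, mem_Ioo]
  by_cases hl : -(n : ℝ) - 1 < x ∧ x < -n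
  · rw [if_pos hl, if_pos (Or.inl hl), one_div_sqrt_two_mul_sq]
  by_cases hr : (n : ℝ) < x ∧ x < n + 1
  · rw [if_neg hl, if_pos hr, if_pos (Or.inr hr), neg_sq, one_div_sqrt_two_mul_sq]
  · rw [if_neg hl, if_neg hr, if_neg (by tauto), sq, zero_mul]

lemma integral_plateauDeriv_sq (n : ℕ) : ∫ x, plateauDeriv n x ^ 2 = 1 / n := by
  have hdisj : Disjoint (Ioo (-(n : ℝ) - 1) (-n)) (Ioo (n : ℝ) (n + 1)) :=
    Set.disjoint_left.2 fun x hx hx' => by linarith [hx.2, hx'.1]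
  rw [plateauDeriv_sq, integral_indicator_const _ (measurableSet_Ioo.union measurableSet_Ioo),
    measureReal_union hdisj measurableSet_Ioo measure_Ioo_lt_top.ne measure_Ioo_lt_top.ne,
    Real.volume_real_Ioo_of_le (by linarith), Real.volume_real_Ioo_of_le (by linarith), smul_eq_mul]
  ring

lemma integral_mul_plateau_sq_le {U : ℝ → ℝ} (hU : LocallyIntegrable U) (hU0 : ∀ x, U x ≤ 0)
    (n : ℕ) : ∫ x, U x * plateau n x ^ 2 ≤ 1 / (2 * n) * ∫ x in -(n : ℝ)..n, U x := by
  have hpoint : ∀ x, U x * plateau n x ^ 2 ≤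
      (Icc (-(n : ℝ)) n).indicator (fun x => 1 / (2 * n) * U x) x := by
    intro x
    by_cases hx : x ∈ Icc (-(n : ℝ)) n
    · rw [indicator_of_mem hx, plateau_sq_of_abs_le (abs_le.2 hx), mul_comm]
    · rw [indicator_of_notMem hx]
      exact mul_nonpos_of_nonpos_of_nonneg (hU0 x) (sq_nonneg _)
  have hint : Integrable fun x => U x * plateau n x ^ 2 :=
    hU.integrable_smul_right_of_hasCompactSupport ((continuous_plateau n).pow 2)
      ((hasCompactSupport_plateau n).comp_left (g := fun y : ℝ => y ^ 2) (by simp))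
  have hint' : Integrable ((Icc (-(n : ℝ)) n).indicator fun x => 1 / (2 * n) * U x) :=
    (integrable_indicator_iff measurableSet_Icc).2
      ((hU.integrableOn_isCompact isCompact_Icc).const_mul _)
  calc ∫ x, U x * plateau n x ^ 2
      ≤ ∫ x, (Icc (-(n : ℝ)) n).indicator (fun x => 1 / (2 * n) * U x) x :=
        integral_mono hint hint' hpoint
    _ = 1 / (2 * n) * ∫ x in -(n : ℝ)..n, U x := by
        rw [integral_indicator measurableSet_Icc, integral_const_mul,
          intervalIntegral.integral_of_le (by linarith [n.cast_nonneg (α := ℝ)]),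
          integral_Icc_eq_integral_Ioc]

lemma Function.Periodic.intervalIntegral_neg_natCast_eq {f : ℝ → ℝ}
    (hf : Function.Periodic f 1) (h_int : ∀ a b, IntervalIntegrable f volume a b) (n : ℕ) :
    ∫ x in -(n : ℝ)..n, f x = 2 * n * ∫ x in 0..1, f x := by
  have := hf.intervalIntegral_add_zsmul_eq (2 * n) (-n) h_int
  rw [hf.intervalIntegral_add_eq (-n) 0, zero_add] at this
  convert this using 2 <;> simp; ring

lemma MeasureTheory.LocallyIntegrable.intervalIntegrable {f : ℝ → ℝ} (hf : LocallyIntegrable f)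
    (a b : ℝ) : IntervalIntegrable f volume a b :=
  (hf.integrableOn_isCompact isCompact_uIcc).intervalIntegrable

section SquareWell

variable {h q1 q2 : ℝ} {V : ℝ → ℝ}

lemma squareWell_eq_indicator_fract (hV : Function.Periodic V 1)
    (hVdef : ∀ x ∈ Ico (0 : ℝ) 1, V x = if q1 ≤ x ∧ x ≤ q2 then -h else 0) (x : ℝ) :
    V x = (Icc q1 q2).indicator (fun _ => -h) (Int.fract x) := by
  rw [← hV.sub_int_mul_eq ⌊x⌋, mul_one, ← Int.fract,
    hVdef _ ⟨Int.fract_nonneg x, Int.fract_lt_one x⟩]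
  simp only [indicator_apply, mem_Icc]

lemma squareWell_nonpos (hh : 0 ≤ h) (hV : Function.Periodic V 1)
    (hVdef : ∀ x ∈ Ico (0 : ℝ) 1, V x = if q1 ≤ x ∧ x ≤ q2 then -h else 0) (x : ℝ) :
    V x ≤ 0 := by
  rw [squareWell_eq_indicator_fract hV hVdef]
  exact indicator_nonpos (fun _ _ => neg_nonpos.2 hh) _

lemma squareWell_locallyIntegrable (hV : Function.Periodic V 1)
    (hVdef : ∀ x ∈ Ico (0 : ℝ) 1, V x = if q1 ≤ x ∧ x ≤ q2 then -h else 0) :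
    LocallyIntegrable V := by
  rw [funext (squareWell_eq_indicator_fract hV hVdef)]
  refine (memLp_top_of_bound ?_ |h| (Filter.Eventually.of_forall fun x => ?_)).locallyIntegrable
    le_top
  · exact ((measurable_const.indicator measurableSet_Icc).comp
      measurable_fract).aestronglyMeasurable
  · simp only [indicator_apply]
    split_ifs <;> simp

lemma intervalIntegral_squareWell (hq1 : 0 < q1) (hq12 : q1 ≤ q2) (hq2 : q2 < 1)
    (hVdef : ∀ x ∈ Ico (0 : ℝ) 1, V x = if q1 ≤ x ∧ x ≤ q2 then -h else 0) :
    ∫ x in 0..1, V x = -((q2 - q1) * h) := by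
  have hV : EqOn V ((Icc q1 q2).indicator fun _ => -h) (Ioo 0 1) := fun x hx => by
    rw [hVdef x (Ioo_subset_Ico_self hx)]
    simp only [indicator_apply, mem_Icc]
  rw [intervalIntegral.integral_of_le zero_le_one, integral_Ioc_eq_integral_Ioo,
    setIntegral_congr_fun measurableSet_Ioo hV, setIntegral_indicator measurableSet_Icc,
    inter_eq_right.2 (Icc_subset_Ioo hq1 hq2), setIntegral_const, Real.volume_real_Icc_of_le hq12,
    smul_eq_mul, mul_neg]

end SquareWell

theorem square_well_form_upper_bound_general (h q1 q2 : ℝ) (hh : 0 < h)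
    (hq1 : 0 < q1) (hq12 : q1 < q2) (hq2 : q2 < 1)
    (V W : ℝ → ℝ)
    (hVper : ∀ x, V (x + 1) = V x)
    (hVdef : ∀ x ∈ Set.Ico (0 : ℝ) 1, V x = if q1 ≤ x ∧ x ≤ q2 then -h else 0)
    (hWle : ∀ x, W x ≤ 0)
    (hWloc : MeasureTheory.LocallyIntegrable W MeasureTheory.volume)
    (n : ℕ) (hn : 0 < n)
    (φ ψ : ℝ → ℝ)
    (hφ : ∀ x, φ x = if |x| ≤ (n : ℝ) then 1 / Real.sqrt (2 * n)
      else if |x| ≤ (n : ℝ) + 1 then ((n : ℝ) + 1 - |x|) / Real.sqrt (2 * n) else 0)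
    (hψ : ∀ x, ψ x = if -(n : ℝ) - 1 < x ∧ x < -(n : ℝ) then 1 / Real.sqrt (2 * n)
      else if (n : ℝ) < x ∧ x < (n : ℝ) + 1 then -(1 / Real.sqrt (2 * n)) else 0) :
    (∫ x, ψ x ^ 2) + ∫ x, (W x + V x) * φ x ^ 2 ≤ 1 / (n : ℝ) - (q2 - q1) * h := by
  replace hVper : Function.Periodic V 1 := hVper
  obtain rfl : φ = plateau n := funext hφ
  obtain rfl : ψ = plateauDeriv n := funext hψ
  have hVle := squareWell_nonpos hh.le hVper hVdef
  have hV := squareWell_locallyIntegrable hVper hVdef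
  have hn' : (0 : ℝ) < n := by exact_mod_cast hn
  calc (∫ x, plateauDeriv n x ^ 2) + ∫ x, (W x + V x) * plateau n x ^ 2
      ≤ 1 / n + 1 / (2 * n) * ∫ x in -(n : ℝ)..n, (W x + V x) := by
        rw [integral_plateauDeriv_sq]
        gcongr
        exact integral_mul_plateau_sq_le (hWloc.add hV) (fun x => add_nonpos (hWle x) (hVle x)) n
    _ ≤ 1 / n + 1 / (2 * n) * ∫ x in -(n : ℝ)..n, V x := by
        gcongr
        exact intervalIntegral.integral_mono_on (by linarith)
          ((hWloc.add hV).intervalIntegrable _ _) (hV.intervalIntegrable _ _)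
          fun x _ => add_le_of_nonpos_left (hWle x)
    _ = 1 / n - (q2 - q1) * h := by
        rw [hVper.intervalIntegral_neg_natCast_eq hV.intervalIntegrable n,
          intervalIntegral_squareWell hq1 hq12.le hq2 hVdef]
        field_simp
        ring

/-- Quadratic-form estimate (Lemma on upper bound of the numerical range):
with `V` the 1-periodic square well equal to `-h` on `[q₁,q₂]`, `W ≤ 0` 1-periodic
locally integrable, and `φₙ` the plateau test function with a.e. derivative `ψₙ`,
one has `∫ |φₙ'|² + ∫ (W + V)|φₙ|² ≤ 1/n - (q₂ - q₁) h`. -/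
theorem square_well_form_upper_bound (h q1 q2 : ℝ) (hh : 0 < h)
    (hq1 : 0 < q1) (hq12 : q1 < q2) (hq2 : q2 < 1)
    (V W : ℝ → ℝ)
    (hVper : ∀ x, V (x + 1) = V x)
    (hVdef : ∀ x ∈ Set.Ico (0 : ℝ) 1, V x = if q1 ≤ x ∧ x ≤ q2 then -h else 0)
    (hWper : ∀ x, W (x + 1) = W x)
    (hWle : ∀ x, W x ≤ 0)
    (hWloc : MeasureTheory.LocallyIntegrable W MeasureTheory.volume)
    (n : ℕ) (hn : 0 < n)
    (φ ψ : ℝ → ℝ)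
    (hφ : ∀ x, φ x = if |x| ≤ (n : ℝ) then 1 / Real.sqrt (2 * n)
      else if |x| ≤ (n : ℝ) + 1 then ((n : ℝ) + 1 - |x|) / Real.sqrt (2 * n) else 0)
    (hψ : ∀ x, ψ x = if -(n : ℝ) - 1 < x ∧ x < -(n : ℝ) then 1 / Real.sqrt (2 * n)
      else if (n : ℝ) < x ∧ x < (n : ℝ) + 1 then -(1 / Real.sqrt (2 * n)) else 0) :
    (∫ x, ψ x ^ 2) + ∫ x, (W x + V x) * φ x ^ 2 ≤ 1 / (n : ℝ) - (q2 - q1) * h :=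
  square_well_form_upper_bound_general h q1 q2 hh hq1 hq12 hq2 V W hVper hVdef hWle hWloc n hn φ ψ
    hφ hψ
end

section
/- Let $H$ be a Hilbert space, $H_0$ a positive invertible self-adjoint operator, and $B$ a densely defined operator such that $K(\lambda) := H_0^{-1/2} B H_0^{1/2} (\lambda - H_0)^{-1}$ extends to a bounded operator for $\lambda \notin \sigma(H_0)$. Then for $\lambda \notin \sigma(H_0)$, the operator $\lambda - H_0 - B$ has a bounded inverse if and only if $I - K(\lambda)$ has a bounded inverse, and in that case $(\lambda - H_0 - B)^{-1} = (\lambda - H_0)^{-1} H_0^{1/2} (I - K(\lambda))^{-1} H_0^{-1/2}$. -/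
/-!
With `R₀ = (λ - H₀)⁻¹` one has `λ - H₀ - B = (1 - B R₀)(λ - H₀)`, so `λ - H₀ - B` is invertible
iff `1 - B R₀` is, with inverse `R₀ (1 - B R₀)⁻¹`. Since `H₀ = S²` commutes with `S`, so does
`R₀`; hence `K(λ) = S⁻¹ B S R₀ = S⁻¹ (B R₀) S`, and `1 - K(λ) = S⁻¹ (1 - B R₀) S` is a conjugate
of `1 - B R₀`.
-/

open scoped Ring

namespace Ring

variable {R : Type*} [Ring R]

theorem sub_eq_one_sub_mul_inverse_mul {a : R} (ha : IsUnit a) (b : R) :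
    a - b = (1 - b * a⁻¹ʳ) * a := by
  rw [sub_mul, one_mul, inverse_mul_cancel_right _ _ ha]

theorem isUnit_units_conj_iff (s : Rˣ) (x : R) : IsUnit (↑s⁻¹ * x * s) ↔ IsUnit x := by
  rw [Units.isUnit_mul_units, Units.isUnit_units_mul]

theorem inverse_units_conj (s : Rˣ) (x : R) : (↑s⁻¹ * x * s)⁻¹ʳ = ↑s⁻¹ * x⁻¹ʳ * s := by
  rw [inverse_mul (.inr s.isUnit), inverse_mul (.inl s⁻¹.isUnit), inverse_unit, inverse_unit,
    inv_inv, mul_assoc]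

theorem one_sub_conj_mul_inverse_eq_conj {a : R} (b : R) {s : Rˣ} (hs : Commute (s : R) a) :
    1 - ↑s⁻¹ * b * s * a⁻¹ʳ = ↑s⁻¹ * (1 - b * a⁻¹ʳ) * s := by
  have hsa : Commute (s : R) a⁻¹ʳ := by
    simpa [inverse_unit] using hs.units_inv_left.ringInverse_ringInverse
  rw [mul_assoc _ (s : R), hsa.eq, mul_sub, sub_mul, mul_one, Units.inv_mul, ← mul_assoc,
    mul_assoc _ b]

theorem isUnit_sub_iff_isUnit_one_sub_conj {a : R} (ha : IsUnit a) (b : R) {s : Rˣ}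
    (hs : Commute (s : R) a) : IsUnit (a - b) ↔ IsUnit (1 - ↑s⁻¹ * b * s * a⁻¹ʳ) := by
  rw [one_sub_conj_mul_inverse_eq_conj b hs, isUnit_units_conj_iff,
    sub_eq_one_sub_mul_inverse_mul ha, ha.mul_right_iff]

theorem inverse_sub_eq_of_commute {a : R} (ha : IsUnit a) (b : R) {s : Rˣ}
    (hs : Commute (s : R) a) :
    (a - b)⁻¹ʳ = a⁻¹ʳ * s * (1 - ↑s⁻¹ * b * s * a⁻¹ʳ)⁻¹ʳ * ↑s⁻¹ := by
  rw [one_sub_conj_mul_inverse_eq_conj b hs, inverse_units_conj,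
    sub_eq_one_sub_mul_inverse_mul ha, inverse_mul (.inr ha)]
  simp only [mul_assoc, Units.mul_inv, Units.mul_inv_cancel_left, mul_one]

end Ring

theorem birman_schwinger_principle_general {H : Type*} [NormedAddCommGroup H]
    [InnerProductSpace ℂ H]
    (H₀ B : H →L[ℂ] H)
    (S : (H →L[ℂ] H)ˣ) (hS : (S : H →L[ℂ] H) * (S : H →L[ℂ] H) = H₀)
    (lam : ℂ) (hlam : lam ∉ spectrum ℂ H₀) :
    (IsUnit (lam • (1 : H →L[ℂ] H) - H₀ - B) ↔
      IsUnit ((1 : H →L[ℂ] H) -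
        (↑S⁻¹ : H →L[ℂ] H) * B * (S : H →L[ℂ] H) *
          Ring.inverse (lam • (1 : H →L[ℂ] H) - H₀))) ∧
    (IsUnit (lam • (1 : H →L[ℂ] H) - H₀ - B) →
      Ring.inverse (lam • (1 : H →L[ℂ] H) - H₀ - B) =
        Ring.inverse (lam • (1 : H →L[ℂ] H) - H₀) * (S : H →L[ℂ] H) *
          Ring.inverse ((1 : H →L[ℂ] H) -
            (↑S⁻¹ : H →L[ℂ] H) * B * (S : H →L[ℂ] H) *
              Ring.inverse (lam • (1 : H →L[ℂ] H) - H₀)) *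
          (↑S⁻¹ : H →L[ℂ] H)) := by
  have hunit : IsUnit (lam • (1 : H →L[ℂ] H) - H₀) := by
    rwa [spectrum.notMem_iff, Algebra.algebraMap_eq_smul_one] at hlam
  have hSH₀ : Commute (S : H →L[ℂ] H) H₀ := hS ▸ (Commute.refl _).mul_right (Commute.refl _)
  have hcomm : Commute (S : H →L[ℂ] H) (lam • (1 : H →L[ℂ] H) - H₀) :=
    ((Commute.one_right _).smul_right lam).sub_right hSH₀
  exact ⟨Ring.isUnit_sub_iff_isUnit_one_sub_conj hunit B hcomm,
    fun _ ↦ Ring.inverse_sub_eq_of_commute hunit B hcomm⟩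

/-- Birman–Schwinger principle (bounded form): let `H₀` be a positive invertible
self-adjoint bounded operator with square root `S` (`S·S = H₀`, `S` invertible),
`B` bounded, and `λ ∉ σ(H₀)`. With `K(λ) = H₀^{-1/2} B H₀^{1/2} (λ - H₀)⁻¹`,
the operator `λ - H₀ - B` is boundedly invertible iff `I - K(λ)` is, and then
`(λ - H₀ - B)⁻¹ = (λ - H₀)⁻¹ H₀^{1/2} (I - K(λ))⁻¹ H₀^{-1/2}`. -/
theorem birman_schwinger_principle {H : Type*} [NormedAddCommGroup H]
    [InnerProductSpace ℂ H] [CompleteSpace H]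
    (H₀ B : H →L[ℂ] H) (hsa : IsSelfAdjoint H₀)
    (hpos : ∀ x : H, 0 ≤ (inner ℂ (H₀ x) x : ℂ).re)
    (S : (H →L[ℂ] H)ˣ) (hS : (S : H →L[ℂ] H) * (S : H →L[ℂ] H) = H₀)
    (lam : ℂ) (hlam : lam ∉ spectrum ℂ H₀) :
    (IsUnit (lam • (1 : H →L[ℂ] H) - H₀ - B) ↔
      IsUnit ((1 : H →L[ℂ] H) -
        (↑S⁻¹ : H →L[ℂ] H) * B * (S : H →L[ℂ] H) *
          Ring.inverse (lam • (1 : H →L[ℂ] H) - H₀))) ∧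
    (IsUnit (lam • (1 : H →L[ℂ] H) - H₀ - B) →
      Ring.inverse (lam • (1 : H →L[ℂ] H) - H₀ - B) =
        Ring.inverse (lam • (1 : H →L[ℂ] H) - H₀) * (S : H →L[ℂ] H) *
          Ring.inverse ((1 : H →L[ℂ] H) -
            (↑S⁻¹ : H →L[ℂ] H) * B * (S : H →L[ℂ] H) *
              Ring.inverse (lam • (1 : H →L[ℂ] H) - H₀)) *
          (↑S⁻¹ : H →L[ℂ] H)) :=
  birman_schwinger_principle_general H₀ B S hS lam hlam
end
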